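/- Let H be a histogram and suppose a tiling T of H by unit horizontal tiles and vertical bars of length v with prescribed projections (m_i), (n_j) exists. Among all such tilings, consider those maximizing the set of maximal-height columns of H whose top cell is covered by a vertical bar in common with the greedy choice (the m_i-greedy choice: among columns whose top cell lies in the first row of H, vertical bars are placed in the columns with largest remaining m_i). Then there exists a valid tiling whose set of maximal-height columns with vertical-bar-covered tops equals exactly the greedy set. -/

import Mathlib

/-- A bar placement in the plane grid `ℕ × ℕ`: `(true, i, j)` is a vertical bar
anchored at `(i,j)` (its topmost cell), `(false, i, j)` a horizontal bar anchored at
`(i,j)` (its leftmost cell). -/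
abbrev BarP := Bool × ℕ × ℕ

/-- The cells covered by a bar: a horizontal bar of length `h` at `(i,j)` covers
`(i,j),…,(i+h-1,j)`; a vertical bar of length `v` at `(i,j)` covers
`(i,j),…,(i,j+v-1)`. -/
def barCells (h v : ℕ) (t : BarP) : Finset (ℕ × ℕ) :=
  if t.1 then (Finset.range v).image (fun s => (t.2.1, t.2.2 + s))
  else (Finset.range h).image (fun s => (t.2.1 + s, t.2.2))

/-- `T` is a tiling of the region `R` by horizontal bars of length `h` and vertical
bars of length `v`: all bars lie inside `R` and every cell of `R` is covered by
exactly one bar. -/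
def IsTilingOf (h v : ℕ) (R : Finset (ℕ × ℕ)) (T : Finset BarP) : Prop :=
  (∀ t ∈ T, barCells h v t ⊆ R) ∧
  ∀ c ∈ R, ∃! t, t ∈ T ∧ c ∈ barCells h v t

/-- Number of vertical bars of `T` lying in column `i`. -/
def vertCount (T : Finset BarP) (i : ℕ) : ℕ :=
  (T.filter (fun t => t.1 = true ∧ t.2.1 = i)).card

/-- Number of horizontal bars of `T` lying in row `j`. -/
def horizCount (T : Finset BarP) (j : ℕ) : ℕ :=
  (T.filter (fun t => t.1 = false ∧ t.2.2 = j)).card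

/-- Number of horizontal bars of `T` whose leftmost cell is in column `i`. -/
def horizStartCount (T : Finset BarP) (i : ℕ) : ℕ :=
  (T.filter (fun t => t.1 = false ∧ t.2.1 = i)).card

/-- The rectangle `R_{a×b} = {0,…,a-1} × {0,…,b-1}`. -/
def rectR (a b : ℕ) : Finset (ℕ × ℕ) := Finset.range a ×ˢ Finset.range b

/-- `H` is a histogram in `R_{a×b}`: with each cell `(i,j)` with `j < b-1`, it also
contains the cell `(i,j+1)` below it (rows numbered from top to bottom). -/
def IsHistogram (a b : ℕ) (H : Finset (ℕ × ℕ)) : Prop :=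
  H ⊆ rectR a b ∧ ∀ i j : ℕ, (i, j) ∈ H → j < b - 1 → (i, j + 1) ∈ H


/-- Anchors of vertical bars in one column: pairwise at distance `≥ v`. -/
def ValidA (v : ℕ) (A : Finset ℕ) : Prop :=
  ∀ ⦃s⦄, s ∈ A → ∀ ⦃s'⦄, s' ∈ A → s < s' → s + v ≤ s'

/-- Row `j` is covered by a bar anchored in `A`. -/
def covA (v : ℕ) (A : Finset ℕ) (j : ℕ) : Prop := ∃ s ∈ A, s ≤ j ∧ j < s + v

instance (v : ℕ) (A : Finset ℕ) (j : ℕ) : Decidable (covA v A j) := by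
  unfold covA; infer_instance

/-- No bar of `A` straddles the cut at `t`. -/
def cleanCut (v : ℕ) (A : Finset ℕ) (t : ℕ) : Prop := ∀ s ∈ A, ¬(s < t ∧ t < s + v)

lemma anchor_clean {v : ℕ} {A : Finset ℕ} (hA : ValidA v A) {s : ℕ} (hs : s ∈ A) :
    cleanCut v A s := by
  intro u hu ⟨h1, h2⟩
  have := hA hu hs h1
  omega

lemma block_bound {v : ℕ} {A B : Finset ℕ} (hB : ValidA v B) (x y : ℕ)
    (hxB : cleanCut v B x)
    (hblock : ∀ t, x < t → t < y → cleanCut v A t → cleanCut v B t → False)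
    (hAcl : ∀ s ∈ A, cleanCut v A s) :
    (A.filter (fun s => x < s ∧ s < y)).card ≤ (B.filter (fun s => x ≤ s ∧ s < y)).card := by
  have key : ∀ s ∈ A.filter (fun s => x < s ∧ s < y), ∃ u ∈ B, u < s ∧ s < u + v := by
    intro s hs
    simp only [Finset.mem_filter] at hs
    obtain ⟨hsA, hx, hy⟩ := hs
    by_contra h
    push_neg at h
    exact hblock s hx hy (hAcl s hsA) (fun u hu ⟨h1, h2⟩ => absurd h2 (not_lt.2 (h u hu h1)))
  classical
  apply Finset.card_le_card_of_injOn
    (fun s => if h : ∃ u ∈ B, u < s ∧ s < u + v then h.choose else 0)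
  · intro s hs
    have h := key s hs
    simp only [dif_pos h]
    obtain ⟨huB, h1, h2⟩ := h.choose_spec
    simp only [Finset.mem_coe, Finset.mem_filter] at hs ⊢
    refine ⟨huB, ?_, ?_⟩
    · -- x ≤ u
      by_contra hlt
      push_neg at hlt
      exact hxB _ huB ⟨hlt, by omega⟩
    · omega
  · intro s1 hs1 s2 hs2 heq
    have h1 := key s1 hs1
    have h2 := key s2 hs2
    simp only [dif_pos h1, dif_pos h2] at heq
    obtain ⟨hu1B, ha1, hb1⟩ := h1.choose_spec
    obtain ⟨hu2B, ha2, hb2⟩ := h2.choose_spec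
    rw [heq] at ha1 hb1
    -- s1, s2 both in (u, u+v) where u = h2.choose; since A valid... we don't have A valid here
    -- use cleanCut of A at anchors instead
    by_contra hne
    rcases lt_or_gt_of_ne hne with h | h
    · exact hAcl s2 (Finset.mem_filter.1 hs2).1 s1 (Finset.mem_filter.1 hs1).1 ⟨h, by omega⟩
    · exact hAcl s1 (Finset.mem_filter.1 hs1).1 s2 (Finset.mem_filter.1 hs2).1 ⟨h, by omega⟩

lemma walk_zero : ∀ (k : ℕ) (C : Finset ℕ) (f : ℕ → ℤ), C.card = k → ∀ (hne : C.Nonempty),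
    f (C.min' hne) ≤ 0 → 0 ≤ f (C.max' hne) →
    (∀ x ∈ C, ∀ y ∈ C, x < y → (∀ z ∈ C, ¬(x < z ∧ z < y)) → |f y - f x| ≤ 1) →
    ∃ t ∈ C, f t = 0 := by
  intro k
  induction k with
  | zero => intro C f hc hne; exact absurd (Finset.card_eq_zero.1 hc) hne.ne_empty
  | succ k ih =>
    intro C f hc hne hmin hmax hstep
    rcases eq_or_lt_of_le (C.min'_le _ (C.max'_mem hne)) with heq | hlt
    · exact ⟨C.min' hne, C.min'_mem hne, le_antisymm hmin (by rw [heq]; exact hmax)⟩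
    · -- at least two elements
      set x₀ := C.min' hne with hx₀
      set C' := C.erase x₀ with hC'
      have hne' : C'.Nonempty := ⟨C.max' hne, Finset.mem_erase.2 ⟨hlt.ne', C.max'_mem hne⟩⟩
      have hcard' : C'.card = k := by
        rw [hC', Finset.card_erase_of_mem (C.min'_mem hne), hc]; rfl
      have hsub : C' ⊆ C := Finset.erase_subset _ _
      have hmax' : C'.max' hne' = C.max' hne := by
        apply le_antisymm
        · exact C.le_max' _ (hsub (C'.max'_mem hne'))
        · exact C'.le_max' _ (Finset.mem_erase.2 ⟨hlt.ne', C.max'_mem hne⟩)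
      set x₁ := C'.min' hne' with hx₁
      have hx₁C : x₁ ∈ C := hsub (C'.min'_mem hne')
      have hx₀lt : x₀ < x₁ := by
        rcases lt_or_eq_of_le (C.min'_le _ hx₁C) with h | h
        · exact h
        · exact absurd h.symm (Finset.mem_erase.1 (C'.min'_mem hne')).1
      by_cases hf : f x₁ ≤ 0
      · exact (ih C' f hcard' hne' hf (by rw [hmax']; exact hmax) (fun x hx y hy hxy hcons =>
          hstep x (hsub hx) y (hsub hy) hxy (fun z hz ⟨h1, h2⟩ => by
            by_cases hzx : z = x₀
            · subst hzx; exact absurd (C.min'_le _ (hsub hx)) (not_le.2 h1)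
            · exact hcons z (Finset.mem_erase.2 ⟨hzx, hz⟩) ⟨h1, h2⟩))).imp
          (fun t ⟨ht, hft⟩ => ⟨hsub ht, hft⟩)
      · push_neg at hf
        have hcons : ∀ z ∈ C, ¬(x₀ < z ∧ z < x₁) := by
          intro z hz ⟨h1, h2⟩
          have : z ∈ C' := Finset.mem_erase.2 ⟨fun h => by omega, hz⟩
          exact absurd (C'.min'_le _ this) (not_le.2 h2)
        have := hstep x₀ (C.min'_mem hne) x₁ hx₁C hx₀lt hcons
        have : f x₀ = 0 := by
          rw [abs_le] at this; omega
        exact ⟨x₀, C.min'_mem hne, this⟩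

lemma exists_cut (v lo hi : ℕ) (hv : 1 ≤ v) (A B : Finset ℕ)
    (hA : ValidA v A) (hB : ValidA v B)
    (hAr : ∀ s ∈ A, lo ≤ s ∧ s + v ≤ hi) (hBr : ∀ s ∈ B, lo ≤ s ∧ s + v ≤ hi)
    (hloB : lo ∈ B) (hloA : lo ∉ A) (hcard : B.card ≤ A.card) :
    ∃ t, lo < t ∧ t ≤ hi ∧ cleanCut v A t ∧ cleanCut v B t ∧
      (A.filter (· < t)).card = (B.filter (· < t)).card := by
  classical
  set C : Finset ℕ := (Finset.Ioc lo hi).filter (fun t => cleanCut v A t ∧ cleanCut v B t)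
    with hCdef
  have hhiC : hi ∈ C := by
    have hlohi : lo < hi := by have := hBr lo hloB; omega
    refine Finset.mem_filter.2 ⟨Finset.mem_Ioc.2 ⟨hlohi, le_refl _⟩, ?_, ?_⟩
    · intro s hs hcontra; have := (hAr s hs).2; omega
    · intro s hs hcontra; have := (hBr s hs).2; omega
  have hne : C.Nonempty := ⟨hi, hhiC⟩
  set f : ℕ → ℤ := fun t => ((A.filter (· < t)).card : ℤ) - (B.filter (· < t)).card with hf
  -- step bound helper
  have hstepAB : ∀ x y : ℕ, x ∈ C ∨ x = lo → lo < y → y ≤ hi → cleanCut v A y → cleanCut v B y →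
      x < y → (∀ z ∈ C, ¬(x < z ∧ z < y)) →
      ((A.filter (fun s => x < s ∧ s < y)).card ≤ (B.filter (fun s => x ≤ s ∧ s < y)).card ∧
       (B.filter (fun s => x < s ∧ s < y)).card ≤ (A.filter (fun s => x ≤ s ∧ s < y)).card) := by
    intro x y hxC hloy hyhi hyA hyB hxy hcons
    have hxA : cleanCut v A x := by
      rcases hxC with h | h
      · exact (Finset.mem_filter.1 h).2.1
      · subst h; intro s hs hc; have := (hAr s hs).1; omega
    have hxB : cleanCut v B x := by
      rcases hxC with h | h
      · exact (Finset.mem_filter.1 h).2.2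
      · subst h; intro s hs hc; have := (hBr s hs).1; omega
    have hblock : ∀ t, x < t → t < y → cleanCut v A t → cleanCut v B t → False := by
      intro t h1 h2 hta htb
      have hxlo : lo ≤ x := by
        rcases hxC with h | h
        · exact le_of_lt (Finset.mem_Ioc.1 (Finset.mem_filter.1 h).1).1
        · omega
      have hthi : t ≤ hi := by omega
      exact hcons t (Finset.mem_filter.2 ⟨Finset.mem_Ioc.2 ⟨by omega, hthi⟩, hta, htb⟩) ⟨h1, h2⟩
    constructor
    · exact block_bound hB x y hxB hblock (fun s hs => anchor_clean hA hs)
    · exact block_bound hA x y hxA (fun t h1 h2 h3 h4 => hblock t h1 h2 h4 h3)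
        (fun s hs => anchor_clean hB hs)
  -- split lemma
  have hsplit : ∀ (D : Finset ℕ) (x y : ℕ), x ≤ y →
      (D.filter (· < y)).card = (D.filter (· < x)).card +
        (D.filter (fun s => x ≤ s ∧ s < y)).card := by
    intro D x y hxy
    have := Finset.card_filter_add_card_filter_not (s := D.filter (· < y))
      (p := (· < x))
    simp only [Finset.filter_filter, not_lt] at this
    rw [show (D.filter fun a => a < y ∧ a < x) = D.filter (· < x) by
        apply Finset.filter_congr; intro s _; omega,
      show (D.filter fun a => a < y ∧ x ≤ a) = D.filter (fun s => x ≤ s ∧ s < y) by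
        apply Finset.filter_congr; intro s _; omega] at this
    omega
  have hins : ∀ (D : Finset ℕ) (x y : ℕ),
      (D.filter (fun s => x ≤ s ∧ s < y)).card ≤
        (D.filter (fun s => x < s ∧ s < y)).card + 1 := by
    intro D x y
    have hsub : D.filter (fun s => x ≤ s ∧ s < y) ⊆
        insert x (D.filter (fun s => x < s ∧ s < y)) := by
      intro s hs
      simp only [Finset.mem_filter] at hs
      rcases eq_or_lt_of_le hs.2.1 with h | h
      · exact Finset.mem_insert.2 (Or.inl h.symm)
      · exact Finset.mem_insert.2 (Or.inr (Finset.mem_filter.2 ⟨hs.1, h, hs.2.2⟩))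
    calc (D.filter (fun s => x ≤ s ∧ s < y)).card
        ≤ (insert x (D.filter (fun s => x < s ∧ s < y))).card := Finset.card_le_card hsub
      _ ≤ _ := Finset.card_insert_le _ _
  -- apply the walk
  have hminle : f (C.min' hne) ≤ 0 := by
    set t₁ := C.min' hne with ht₁
    have ht₁C : t₁ ∈ C := C.min'_mem hne
    have ht₁mem := Finset.mem_Ioc.1 (Finset.mem_filter.1 ht₁C).1
    have hcons : ∀ z ∈ C, ¬(lo < z ∧ z < t₁) := by
      intro z hz ⟨h1, h2⟩
      exact absurd (C.min'_le _ hz) (not_le.2 h2)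
    have hb := (hstepAB lo t₁ (Or.inr rfl) ht₁mem.1 ht₁mem.2
      (Finset.mem_filter.1 ht₁C).2.1 (Finset.mem_filter.1 ht₁C).2.2 ht₁mem.1 hcons).1
    have e1 : A.filter (· < t₁) = A.filter (fun s => lo < s ∧ s < t₁) := by
      apply Finset.filter_congr; intro s hs
      have h1 := (hAr s hs).1
      have h2 : s ≠ lo := fun h => hloA (h ▸ hs)
      omega
    have e2 : B.filter (· < t₁) = B.filter (fun s => lo ≤ s ∧ s < t₁) := by
      apply Finset.filter_congr; intro s hs
      have h1 := (hBr s hs).1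
      omega
    show ((A.filter (· < t₁)).card : ℤ) - (B.filter (· < t₁)).card ≤ 0
    rw [e1, e2]
    exact_mod_cast sub_nonpos.2 (Int.ofNat_le.2 hb)
  have hmaxmem : C.max' hne = hi := by
    apply le_antisymm
    · exact (Finset.mem_Ioc.1 (Finset.mem_filter.1 (C.max'_mem hne)).1).2
    · exact C.le_max' _ hhiC
  have hmaxge : 0 ≤ f (C.max' hne) := by
    rw [hmaxmem]
    have e1 : A.filter (· < hi) = A := by
      apply Finset.filter_true_of_mem; intro s hs; have := (hAr s hs).2; omega
    have e2 : B.filter (· < hi) = B := by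
      apply Finset.filter_true_of_mem; intro s hs; have := (hBr s hs).2; omega
    show ((A.filter (· < hi)).card : ℤ) - (B.filter (· < hi)).card ≥ 0
    rw [e1, e2]
    exact_mod_cast sub_nonneg.2 (Int.ofNat_le.2 hcard)
  have hstep : ∀ x ∈ C, ∀ y ∈ C, x < y → (∀ z ∈ C, ¬(x < z ∧ z < y)) → |f y - f x| ≤ 1 := by
    intro x hx y hy hxy hcons
    have hymem := Finset.mem_Ioc.1 (Finset.mem_filter.1 hy).1
    have hb := hstepAB x y (Or.inl hx) hymem.1 hymem.2
      (Finset.mem_filter.1 hy).2.1 (Finset.mem_filter.1 hy).2.2 hxy hcons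
    have sA := hsplit A x y hxy.le
    have sB := hsplit B x y hxy.le
    have iA := hins A x y
    have iB := hins B x y
    have mA : (A.filter (fun s => x < s ∧ s < y)).card ≤
        (A.filter (fun s => x ≤ s ∧ s < y)).card := by
      apply Finset.card_le_card; intro s hs
      have h := Finset.mem_filter.1 hs
      exact Finset.mem_filter.2 ⟨h.1, by omega⟩
    have mB : (B.filter (fun s => x < s ∧ s < y)).card ≤
        (B.filter (fun s => x ≤ s ∧ s < y)).card := by
      apply Finset.card_le_card; intro s hs
      have h := Finset.mem_filter.1 hs
      exact Finset.mem_filter.2 ⟨h.1, by omega⟩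
    rw [abs_le]
    obtain ⟨hb1, hb2⟩ := hb
    have goal1 : f y - f x = ((A.filter (· < y)).card : ℤ) - (B.filter (· < y)).card
        - ((A.filter (· < x)).card : ℤ) + (B.filter (· < x)).card := by
      show ((A.filter (· < y)).card : ℤ) - (B.filter (· < y)).card
        - (((A.filter (· < x)).card : ℤ) - (B.filter (· < x)).card) = _
      ring
    rw [goal1]
    omega
  obtain ⟨t, htC, hft⟩ := walk_zero C.card C f rfl hne hminle hmaxge hstep
  have htmem := Finset.mem_Ioc.1 (Finset.mem_filter.1 htC).1
  refine ⟨t, htmem.1, htmem.2, (Finset.mem_filter.1 htC).2.1, (Finset.mem_filter.1 htC).2.2, ?_⟩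
  have : ((A.filter (· < t)).card : ℤ) - (B.filter (· < t)).card = 0 := hft
  omega

lemma mix_valid {v t : ℕ} {X Y : Finset ℕ} (hX : ValidA v X) (hY : ValidA v Y)
    (htY : cleanCut v Y t) :
    ValidA v (X.filter (fun s => t ≤ s) ∪ Y.filter (fun s => s < t)) := by
  intro s hs s' hs' hlt
  rcases Finset.mem_union.1 hs with h | h <;> rcases Finset.mem_union.1 hs' with h' | h' <;>
    simp only [Finset.mem_filter] at h h'
  · exact hX h.1 h'.1 hlt
  · omega
  · -- s low (from Y), s' high (from X): clean cut gives s + v ≤ t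
    have := htY s h.1
    omega
  · exact hY h.1 h'.1 hlt

lemma mix_cov_lt {v t j : ℕ} (hj : j < t) (X Y : Finset ℕ) :
    covA v (X.filter (fun s => t ≤ s) ∪ Y.filter (fun s => s < t)) j ↔ covA v Y j := by
  constructor
  · rintro ⟨s, hs, h1, h2⟩
    rcases Finset.mem_union.1 hs with h | h <;> simp only [Finset.mem_filter] at h
    · omega
    · exact ⟨s, h.1, h1, h2⟩
  · rintro ⟨s, hs, h1, h2⟩
    exact ⟨s, Finset.mem_union.2 (Or.inr (Finset.mem_filter.2 ⟨hs, by omega⟩)), h1, h2⟩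

lemma mix_cov_ge {v t j : ℕ} (hj : t ≤ j) {X Y : Finset ℕ}
    (htX : cleanCut v X t) (htY : cleanCut v Y t) :
    covA v (X.filter (fun s => t ≤ s) ∪ Y.filter (fun s => s < t)) j ↔ covA v X j := by
  constructor
  · rintro ⟨s, hs, h1, h2⟩
    rcases Finset.mem_union.1 hs with h | h <;> simp only [Finset.mem_filter] at h
    · exact ⟨s, h.1, h1, h2⟩
    · exact absurd ⟨h.2, by omega⟩ (htY s h.1)
  · rintro ⟨s, hs, h1, h2⟩
    have hts : t ≤ s := by
      by_contra hc
      exact htX s hs ⟨by omega, by omega⟩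
    exact ⟨s, Finset.mem_union.2 (Or.inl (Finset.mem_filter.2 ⟨hs, hts⟩)), h1, h2⟩

lemma mix_card {t : ℕ} (X Y : Finset ℕ) :
    (X.filter (fun s => t ≤ s) ∪ Y.filter (fun s => s < t)).card
      = X.card - (X.filter (fun s => s < t)).card + (Y.filter (fun s => s < t)).card := by
  rw [Finset.card_union_of_disjoint]
  · congr 1
    have := Finset.card_filter_add_card_filter_not (s := X) (p := fun s => s < t)
    have e : X.filter (fun s => ¬ s < t) = X.filter (fun s => t ≤ s) := by
      apply Finset.filter_congr; intro s _; omega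
    rw [e] at this
    omega
  · rw [Finset.disjoint_left]
    intro s hs hs'
    simp only [Finset.mem_filter] at hs hs'
    omega

lemma exchange_line (v lo hi : ℕ) (hv : 1 ≤ v) (A B : Finset ℕ)
    (hA : ValidA v A) (hB : ValidA v B)
    (hAr : ∀ s ∈ A, lo ≤ s ∧ s + v ≤ hi) (hBr : ∀ s ∈ B, lo ≤ s ∧ s + v ≤ hi)
    (hloB : lo ∈ B) (hloA : lo ∉ A) (hcard : B.card ≤ A.card) :
    ∃ A' B' : Finset ℕ, ValidA v A' ∧ ValidA v B' ∧
      (∀ s ∈ A', lo ≤ s ∧ s + v ≤ hi) ∧ (∀ s ∈ B', lo ≤ s ∧ s + v ≤ hi) ∧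
      A'.card = A.card ∧ B'.card = B.card ∧ lo ∈ A' ∧ lo ∉ B' ∧
      ∀ j : ℕ, ((covA v A' j ↔ covA v B j) ∧ (covA v B' j ↔ covA v A j)) ∨
               ((covA v A' j ↔ covA v A j) ∧ (covA v B' j ↔ covA v B j)) := by
  obtain ⟨t, hlot, hthi, hctA, hctB, hcnt⟩ :=
    exists_cut v lo hi hv A B hA hB hAr hBr hloB hloA hcard
  refine ⟨A.filter (fun s => t ≤ s) ∪ B.filter (fun s => s < t),
          B.filter (fun s => t ≤ s) ∪ A.filter (fun s => s < t),
          mix_valid hA hB hctB, mix_valid hB hA hctA, ?_, ?_, ?_, ?_, ?_, ?_, ?_⟩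
  · intro s hs
    rcases Finset.mem_union.1 hs with h | h <;> simp only [Finset.mem_filter] at h
    · exact hAr s h.1
    · exact hBr s h.1
  · intro s hs
    rcases Finset.mem_union.1 hs with h | h <;> simp only [Finset.mem_filter] at h
    · exact hBr s h.1
    · exact hAr s h.1
  · rw [mix_card, hcnt]
    have : (A.filter (fun s => s < t)).card ≤ A.card := Finset.card_filter_le _ _
    omega
  · rw [mix_card, ← hcnt]
    have : (B.filter (fun s => s < t)).card ≤ B.card := Finset.card_filter_le _ _
    omega
  · exact Finset.mem_union.2 (Or.inr (Finset.mem_filter.2 ⟨hloB, hlot⟩))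
  · intro hc
    rcases Finset.mem_union.1 hc with h | h <;> simp only [Finset.mem_filter] at h
    · omega
    · exact hloA h.1
  · intro j
    rcases lt_or_ge j t with hj | hj
    · exact Or.inl ⟨mix_cov_lt hj A B, mix_cov_lt hj B A⟩
    · exact Or.inr ⟨mix_cov_ge hj hctA hctB, mix_cov_ge hj hctB hctA⟩

-- Layer 2: columns of a tiling
lemma mem_barCells_vert {v : ℕ} {i s : ℕ} {c : ℕ × ℕ} :
    c ∈ barCells 1 v (true, i, s) ↔ c.1 = i ∧ s ≤ c.2 ∧ c.2 < s + v := by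
  simp only [barCells, if_pos, Finset.mem_image, Finset.mem_range]
  constructor
  · rintro ⟨r, hr, rfl⟩; exact ⟨rfl, by omega, by omega⟩
  · rintro ⟨h1, h2, h3⟩
    exact ⟨c.2 - s, by omega, by rw [← h1]; ext <;> simp <;> omega⟩

lemma mem_barCells_horiz {v : ℕ} {i j : ℕ} {c : ℕ × ℕ} :
    c ∈ barCells 1 v (false, i, j) ↔ c = (i, j) := by
  simp only [barCells]
  norm_num

lemma bar_col {v : ℕ} {t : BarP} {c : ℕ × ℕ} (hc : c ∈ barCells 1 v t) : c.1 = t.2.1 := by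
  obtain ⟨bl, i, j⟩ := t
  cases bl
  · rw [mem_barCells_horiz] at hc; rw [hc]
  · exact mem_barCells_vert.1 hc |>.1

def colAnchors (T : Finset BarP) (i : ℕ) : Finset ℕ :=
  (T.filter (fun t => t.1 = true ∧ t.2.1 = i)).image (fun t => t.2.2)

lemma mem_colAnchors {T : Finset BarP} {i s : ℕ} :
    s ∈ colAnchors T i ↔ (true, i, s) ∈ T := by
  constructor
  · intro hs
    obtain ⟨t, ht, rfl⟩ := Finset.mem_image.1 hs
    obtain ⟨htT, h1, h2⟩ := Finset.mem_filter.1 ht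
    obtain ⟨bl, i', j⟩ := t
    simp only at h1 h2
    subst h1; subst h2
    exact htT
  · intro h
    exact Finset.mem_image.2 ⟨(true, i, s), Finset.mem_filter.2 ⟨h, rfl, rfl⟩, rfl⟩

lemma colAnchors_card {T : Finset BarP} {i : ℕ} : (colAnchors T i).card = vertCount T i := by
  rw [colAnchors, vertCount, Finset.card_image_of_injOn]
  intro t ht t' ht' heq
  simp only [Finset.mem_coe, Finset.mem_filter] at ht ht'
  obtain ⟨bl, a1, a2⟩ := t
  obtain ⟨bl', a1', a2'⟩ := t'
  simp only at ht ht' heq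
  simp [ht.2.1, ht'.2.1, ht.2.2, ht'.2.2, heq]

def colBars (v j₀ b i : ℕ) (A : Finset ℕ) : Finset BarP :=
  A.image (fun s => (true, i, s)) ∪
    ((Finset.Ico j₀ b).filter (fun j => ¬ covA v A j)).image (fun j => (false, i, j))

lemma colBars_col {v j₀ b i : ℕ} {A : Finset ℕ} {t : BarP} (ht : t ∈ colBars v j₀ b i A) :
    t.2.1 = i := by
  rcases Finset.mem_union.1 ht with h | h <;> obtain ⟨s, _, rfl⟩ := Finset.mem_image.1 h <;> rfl

lemma mem_colBars_vert {v j₀ b i : ℕ} {A : Finset ℕ} {i' s : ℕ} :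
    (true, i', s) ∈ colBars v j₀ b i A ↔ i' = i ∧ s ∈ A := by
  constructor
  · intro h
    rcases Finset.mem_union.1 h with h | h <;> obtain ⟨u, hu, he⟩ := Finset.mem_image.1 h
    · simp only [Prod.mk.injEq] at he
      exact ⟨he.2.1.symm, he.2.2 ▸ hu⟩
    · exact absurd (congrArg Prod.fst he) (by simp)
  · rintro ⟨rfl, hs⟩
    exact Finset.mem_union.2 (Or.inl (Finset.mem_image.2 ⟨s, hs, rfl⟩))

lemma mem_colBars_horiz {v j₀ b i : ℕ} {A : Finset ℕ} {i' j : ℕ} :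
    (false, i', j) ∈ colBars v j₀ b i A ↔ i' = i ∧ j₀ ≤ j ∧ j < b ∧ ¬ covA v A j := by
  constructor
  · intro h
    rcases Finset.mem_union.1 h with h | h <;> obtain ⟨u, hu, he⟩ := Finset.mem_image.1 h
    · exact absurd (congrArg Prod.fst he) (by simp)
    · simp only [Prod.mk.injEq] at he
      simp only [Finset.mem_filter, Finset.mem_Ico] at hu
      exact ⟨he.2.1.symm, he.2.2 ▸ ⟨hu.1.1, hu.1.2, hu.2⟩⟩
  · rintro ⟨rfl, h1, h2, h3⟩
    exact Finset.mem_union.2 (Or.inr (Finset.mem_image.2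
      ⟨j, Finset.mem_filter.2 ⟨Finset.mem_Ico.2 ⟨h1, h2⟩, h3⟩, rfl⟩))

lemma hist_col_full {a b : ℕ} {H : Finset (ℕ × ℕ)} (hH : IsHistogram a b H)
    {i j₀ : ℕ} (h : (i, j₀) ∈ H) : ∀ j, j₀ ≤ j → j < b → (i, j) ∈ H := by
  intro j hj hjb
  induction j, hj using Nat.le_induction with
  | base => exact h
  | succ j ih hj => exact hH.2 i j (hj (by omega)) (by omega)

lemma cell_bounds {a b : ℕ} {H : Finset (ℕ × ℕ)} (hH : IsHistogram a b H)
    {i j : ℕ} (h : (i, j) ∈ H) : i < a ∧ j < b := by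
  have := hH.1 h
  simp only [rectR, Finset.mem_product, Finset.mem_range] at this
  exact this

lemma anchors_valid {v : ℕ} {H : Finset (ℕ × ℕ)} {T : Finset BarP}
    (hT : IsTilingOf 1 v H T) (hv : 1 ≤ v) (i : ℕ) : ValidA v (colAnchors T i) := by
  intro s hs s' hs' hlt
  by_contra hc
  push_neg at hc
  have hsT := mem_colAnchors.1 hs
  have hsT' := mem_colAnchors.1 hs'
  have hcell : (i, s') ∈ barCells 1 v (true, i, s) := mem_barCells_vert.2 ⟨rfl, by omega, by omega⟩
  have hcell' : (i, s') ∈ barCells 1 v (true, i, s') := mem_barCells_vert.2 ⟨rfl, le_refl _, by omega⟩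
  have hH' : (i, s') ∈ H := hT.1 _ hsT' hcell'
  obtain ⟨t, -, huniq⟩ := hT.2 _ hH'
  have := (huniq _ ⟨hsT, hcell⟩).trans (huniq _ ⟨hsT', hcell'⟩).symm
  simp only [Prod.mk.injEq] at this
  omega

lemma anchors_range {a b v : ℕ} {H : Finset (ℕ × ℕ)} {T : Finset BarP} {j₀ : ℕ}
    (hH : IsHistogram a b H) (hT : IsTilingOf 1 v H T) (hv : 1 ≤ v)
    (hj₀min : ∀ i j : ℕ, (i, j) ∈ H → j₀ ≤ j) (i : ℕ) :
    ∀ s ∈ colAnchors T i, j₀ ≤ s ∧ s + v ≤ b := by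
  intro s hs
  have hsT := mem_colAnchors.1 hs
  have h1 : (i, s) ∈ H := hT.1 _ hsT (mem_barCells_vert.2 ⟨rfl, le_refl _, by omega⟩)
  have h2 : (i, s + v - 1) ∈ H := hT.1 _ hsT (mem_barCells_vert.2 ⟨rfl, by omega, by omega⟩)
  have := cell_bounds hH h2
  exact ⟨hj₀min _ _ h1, by omega⟩

lemma horiz_mem_iff {v : ℕ} {H : Finset (ℕ × ℕ)} {T : Finset BarP}
    (hT : IsTilingOf 1 v H T) {i j : ℕ} (hij : (i, j) ∈ H) :
    (false, i, j) ∈ T ↔ ¬ covA v (colAnchors T i) j := by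
  obtain ⟨t₀, ht₀, huniq⟩ := hT.2 _ hij
  constructor
  · rintro hmem ⟨s, hs, h1, h2⟩
    have hvmem : (i, j) ∈ barCells 1 v (true, i, s) := mem_barCells_vert.2 ⟨rfl, h1, h2⟩
    have e1 := huniq _ ⟨hmem, mem_barCells_horiz.2 rfl⟩
    have e2 := huniq _ ⟨mem_colAnchors.1 hs, hvmem⟩
    have e3 := e2.trans e1.symm
    exact absurd (congrArg Prod.fst e3) (by simp)
  · intro hnc
    obtain ⟨bl, i', s⟩ := t₀
    cases bl
    · have heq := mem_barCells_horiz.1 ht₀.2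
      simp only [Prod.mk.injEq] at heq
      obtain ⟨rfl, rfl⟩ := heq
      exact ht₀.1
    · obtain ⟨hc1, hc2, hc3⟩ := mem_barCells_vert.1 ht₀.2
      simp only at hc1
      exact absurd ⟨s, mem_colAnchors.2 (hc1 ▸ ht₀.1), hc2, hc3⟩ hnc

lemma column_eq {a b v : ℕ} {H : Finset (ℕ × ℕ)} {T : Finset BarP} {j₀ : ℕ}
    (hH : IsHistogram a b H) (hT : IsTilingOf 1 v H T) (hv : 1 ≤ v)
    (hj₀min : ∀ i j : ℕ, (i, j) ∈ H → j₀ ≤ j) {i : ℕ} (hcol : (i, j₀) ∈ H) :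
    T.filter (fun t => t.2.1 = i) = colBars v j₀ b i (colAnchors T i) := by
  ext t
  obtain ⟨bl, i', j⟩ := t
  simp only [Finset.mem_filter]
  cases bl
  · rw [mem_colBars_horiz]
    constructor
    · rintro ⟨hmem, rfl⟩
      have hij : (i', j) ∈ H := hT.1 _ hmem (mem_barCells_horiz.2 rfl)
      exact ⟨rfl, hj₀min _ _ hij, (cell_bounds hH hij).2, (horiz_mem_iff hT hij).1 hmem⟩
    · rintro ⟨rfl, h1, h2, h3⟩
      have hij : (i', j) ∈ H := hist_col_full hH hcol j h1 h2
      exact ⟨(horiz_mem_iff hT hij).2 h3, rfl⟩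
  · rw [mem_colBars_vert]
    constructor
    · rintro ⟨hmem, rfl⟩
      exact ⟨rfl, mem_colAnchors.2 hmem⟩
    · rintro ⟨rfl, hs⟩
      exact ⟨mem_colAnchors.1 hs, rfl⟩

lemma colBars_subset {a b v j₀ i : ℕ} {H : Finset (ℕ × ℕ)} {A : Finset ℕ}
    (hH : IsHistogram a b H) (hcol : (i, j₀) ∈ H) (hv : 1 ≤ v)
    (hAr : ∀ s ∈ A, j₀ ≤ s ∧ s + v ≤ b) :
    ∀ t ∈ colBars v j₀ b i A, barCells 1 v t ⊆ H := by
  intro t ht c hc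
  obtain ⟨bl, x, y⟩ := t
  cases bl
  · obtain ⟨rfl, h1, h2, h3⟩ := mem_colBars_horiz.1 ht
    rw [mem_barCells_horiz.1 hc]
    exact hist_col_full hH hcol y h1 h2
  · obtain ⟨rfl, hy⟩ := mem_colBars_vert.1 ht
    obtain ⟨hc1, hc2, hc3⟩ := mem_barCells_vert.1 hc
    have := hAr y hy
    have : (c.1, c.2) ∈ H := hc1 ▸ hist_col_full hH hcol c.2 (by omega) (by omega)
    simpa using this

lemma colBars_cover {b v j₀ i : ℕ} {A : Finset ℕ} (hv : 1 ≤ v) (hA : ValidA v A) :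
    ∀ j, j₀ ≤ j → j < b →
      ∃! t, t ∈ colBars v j₀ b i A ∧ (i, j) ∈ barCells 1 v t := by
  intro j h1 h2
  by_cases hc : covA v A j
  · obtain ⟨s, hs, hs1, hs2⟩ := hc
    refine ⟨(true, i, s), ⟨mem_colBars_vert.2 ⟨rfl, hs⟩, mem_barCells_vert.2 ⟨rfl, hs1, hs2⟩⟩, ?_⟩
    rintro ⟨bl, x, y⟩ ⟨hmem, hcell⟩
    cases bl
    · obtain ⟨-, -, -, h3⟩ := mem_colBars_horiz.1 hmem
      have := mem_barCells_horiz.1 hcell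
      simp only [Prod.mk.injEq] at this
      exact absurd ⟨s, hs, hs1, hs2⟩ (this.2 ▸ h3)
    · obtain ⟨rfl, hy⟩ := mem_colBars_vert.1 hmem
      obtain ⟨-, hy1, hy2⟩ := mem_barCells_vert.1 hcell
      have : y = s := by
        rcases lt_trichotomy y s with h | h | h
        · have := hA hy hs h; omega
        · exact h
        · have := hA hs hy h; omega
      rw [this]
  · refine ⟨(false, i, j), ⟨mem_colBars_horiz.2 ⟨rfl, h1, h2, hc⟩, mem_barCells_horiz.2 rfl⟩, ?_⟩
    rintro ⟨bl, x, y⟩ ⟨hmem, hcell⟩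
    cases bl
    · have := mem_barCells_horiz.1 hcell
      simp only [Prod.mk.injEq] at this
      rw [this.1, this.2]
    · obtain ⟨rfl, hy⟩ := mem_colBars_vert.1 hmem
      obtain ⟨-, hy1, hy2⟩ := mem_barCells_vert.1 hcell
      exact absurd ⟨y, hy, hy1, hy2⟩ hc

lemma colAnchors_colBars {b v j₀ i i' : ℕ} {A : Finset ℕ} :
    colAnchors (colBars v j₀ b i A) i' = if i' = i then A else ∅ := by
  ext s
  rw [mem_colAnchors, mem_colBars_vert]
  split_ifs with h <;> simp [h]

lemma vertCount_colBars {b v j₀ i i' : ℕ} {A : Finset ℕ} :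
    vertCount (colBars v j₀ b i A) i' = if i' = i then A.card else 0 := by
  rw [← colAnchors_card, colAnchors_colBars]
  split_ifs <;> simp

lemma horizCount_colBars {b v j₀ i j : ℕ} {A : Finset ℕ} :
    horizCount (colBars v j₀ b i A) j
      = if j₀ ≤ j ∧ j < b ∧ ¬ covA v A j then 1 else 0 := by
  rw [horizCount]
  have : (colBars v j₀ b i A).filter (fun t => t.1 = false ∧ t.2.2 = j)
      = if j₀ ≤ j ∧ j < b ∧ ¬ covA v A j then {(false, i, j)} else ∅ := by
    ext t
    obtain ⟨bl, x, y⟩ := t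
    cases bl
    · constructor
      · intro hmem
        obtain ⟨hcb, -, heq⟩ := Finset.mem_filter.1 hmem
        simp only at heq
        subst heq
        obtain ⟨rfl, h1, h2, h3⟩ := mem_colBars_horiz.1 hcb
        rw [if_pos ⟨h1, h2, h3⟩]
        exact Finset.mem_singleton.2 rfl
      · intro hmem
        split_ifs at hmem with h
        · have := Finset.mem_singleton.1 hmem
          simp only [Prod.mk.injEq] at this
          obtain ⟨-, rfl, rfl⟩ := this
          exact Finset.mem_filter.2 ⟨mem_colBars_horiz.2 ⟨rfl, h⟩, rfl, rfl⟩
        · exact absurd hmem (Finset.notMem_empty _)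
    · constructor
      · intro hmem
        exact absurd (Finset.mem_filter.1 hmem).2.1 (by simp)
      · intro hmem
        split_ifs at hmem
        · exact absurd (Finset.mem_singleton.1 hmem) (by simp)
        · exact absurd hmem (Finset.notMem_empty _)
  rw [this]
  split_ifs <;> simp

lemma filter_card_union {p : BarP → Prop} [DecidablePred p] {S S' : Finset BarP}
    (h : Disjoint S S') :
    ((S ∪ S').filter p).card = (S.filter p).card + (S'.filter p).card := by
  rw [Finset.filter_union, Finset.card_union_of_disjoint (Finset.disjoint_filter_filter h)]

lemma unit_swap {v j₀ b j : ℕ} {A B A' B' : Finset ℕ}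
    (h : ((covA v A' j ↔ covA v B j) ∧ (covA v B' j ↔ covA v A j)) ∨
         ((covA v A' j ↔ covA v A j) ∧ (covA v B' j ↔ covA v B j))) :
    (if j₀ ≤ j ∧ j < b ∧ ¬ covA v A' j then 1 else 0)
      + (if j₀ ≤ j ∧ j < b ∧ ¬ covA v B' j then 1 else 0)
    = (if j₀ ≤ j ∧ j < b ∧ ¬ covA v A j then 1 else 0)
      + (if j₀ ≤ j ∧ j < b ∧ ¬ covA v B j then 1 else 0) := by
  rcases h with ⟨h1, h2⟩ | ⟨h1, h2⟩ <;> split_ifs <;> first | rfl | tauto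

lemma exchange_step {a b v j₀ : ℕ} {H : Finset (ℕ × ℕ)} {T : Finset BarP}
    (hH : IsHistogram a b H) (hv : 1 ≤ v)
    (hj₀min : ∀ i j : ℕ, (i, j) ∈ H → j₀ ≤ j)
    (hT : IsTilingOf 1 v H T) {i₁ i₂ : ℕ} (hne : i₁ ≠ i₂)
    (h1H : (i₁, j₀) ∈ H) (h2H : (i₂, j₀) ∈ H)
    (h1top : ¬ ∃ t ∈ T, t.1 = true ∧ (i₁, j₀) ∈ barCells 1 v t)
    (h2top : ∃ t ∈ T, t.1 = true ∧ (i₂, j₀) ∈ barCells 1 v t)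
    (hcard : vertCount T i₂ ≤ vertCount T i₁) :
    ∃ T', IsTilingOf 1 v H T' ∧ (∀ i, vertCount T' i = vertCount T i) ∧
      (∀ j, horizCount T' j = horizCount T j) ∧
      (∃ t ∈ T', t.1 = true ∧ (i₁, j₀) ∈ barCells 1 v t) ∧
      (¬ ∃ t ∈ T', t.1 = true ∧ (i₂, j₀) ∈ barCells 1 v t) ∧
      (∀ i, i ≠ i₁ → i ≠ i₂ →
        ((∃ t ∈ T', t.1 = true ∧ (i, j₀) ∈ barCells 1 v t) ↔
         (∃ t ∈ T, t.1 = true ∧ (i, j₀) ∈ barCells 1 v t))) := by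
  set A := colAnchors T i₁ with hAdef
  set B := colAnchors T i₂ with hBdef
  have hAv : ValidA v A := anchors_valid hT hv i₁
  have hBv : ValidA v B := anchors_valid hT hv i₂
  have hAr : ∀ s ∈ A, j₀ ≤ s ∧ s + v ≤ b := anchors_range hH hT hv hj₀min i₁
  have hBr : ∀ s ∈ B, j₀ ≤ s ∧ s + v ≤ b := anchors_range hH hT hv hj₀min i₂
  have hj₀A : j₀ ∉ A := by
    intro hc
    exact h1top ⟨(true, i₁, j₀), mem_colAnchors.1 hc, rfl,
      mem_barCells_vert.2 ⟨rfl, le_refl _, by omega⟩⟩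
  have hj₀B : j₀ ∈ B := by
    obtain ⟨t, htT, htv, htc⟩ := h2top
    obtain ⟨bl, x, s⟩ := t
    simp only at htv; subst htv
    obtain ⟨hx, h1, h2⟩ := mem_barCells_vert.1 htc
    simp only at hx; subst hx
    have hs : s ∈ B := mem_colAnchors.2 htT
    have := (hBr s hs).1
    have heq : s = j₀ := by omega
    exact heq ▸ hs
  have hAB : B.card ≤ A.card := by
    rw [hAdef, hBdef, colAnchors_card, colAnchors_card]; exact hcard
  obtain ⟨A', B', hA'v, hB'v, hA'r, hB'r, hA'c, hB'c, hj₀A', hj₀B', hcov⟩ :=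
    exchange_line v j₀ b hv A B hAv hBv hAr hBr hj₀B hj₀A hAB
  set F := T.filter (fun t => ¬(t.2.1 = i₁ ∨ t.2.1 = i₂)) with hF
  have hTdec : T = (F ∪ colBars v j₀ b i₁ A) ∪ colBars v j₀ b i₂ B := by
    rw [hAdef, hBdef, ← column_eq hH hT hv hj₀min h1H, ← column_eq hH hT hv hj₀min h2H, hF]
    ext t
    simp only [Finset.mem_union, Finset.mem_filter]
    by_cases h1 : t.2.1 = i₁ <;> by_cases h2 : t.2.1 = i₂ <;> tauto
  have hdisj1 : ∀ (X : Finset ℕ), Disjoint F (colBars v j₀ b i₁ X) := by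
    intro X
    rw [Finset.disjoint_left]
    intro t ht ht'
    exact (Finset.mem_filter.1 ht).2 (Or.inl (colBars_col ht'))
  have hdisj2 : ∀ (X Y : Finset ℕ),
      Disjoint (F ∪ colBars v j₀ b i₁ X) (colBars v j₀ b i₂ Y) := by
    intro X Y
    rw [Finset.disjoint_left]
    intro t ht ht'
    have hcol := colBars_col ht'
    rcases Finset.mem_union.1 ht with h | h
    · exact (Finset.mem_filter.1 h).2 (Or.inr hcol)
    · exact hne ((colBars_col h).symm.trans hcol)
  refine ⟨(F ∪ colBars v j₀ b i₁ A') ∪ colBars v j₀ b i₂ B', ⟨?_, ?_⟩, ?_, ?_, ?_, ?_, ?_⟩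
  · -- bars inside H
    intro t ht
    rcases Finset.mem_union.1 ht with ht | ht
    · rcases Finset.mem_union.1 ht with ht | ht
      · exact hT.1 _ (Finset.mem_filter.1 ht).1
      · exact colBars_subset hH h1H hv hA'r _ ht
    · exact colBars_subset hH h2H hv hB'r _ ht
  · -- unique cover
    rintro ⟨x, y⟩ hc
    have hy1 : j₀ ≤ y := hj₀min _ _ hc
    have hy2 : y < b := (cell_bounds hH hc).2
    by_cases hx1 : x = i₁
    · subst hx1
      obtain ⟨t₀, ht₀, huniq⟩ := colBars_cover (i := x) hv hA'v y hy1 hy2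
      refine ⟨t₀, ⟨Finset.mem_union.2 (Or.inl (Finset.mem_union.2 (Or.inr ht₀.1))), ht₀.2⟩, ?_⟩
      rintro t' ⟨ht'm, ht'c⟩
      have hcol : t'.2.1 = x := (bar_col ht'c).symm
      rcases Finset.mem_union.1 ht'm with h | h
      · rcases Finset.mem_union.1 h with h | h
        · exact absurd (Or.inl hcol) (Finset.mem_filter.1 h).2
        · exact huniq t' ⟨h, ht'c⟩
      · exact absurd ((colBars_col h).symm.trans hcol).symm hne
    · by_cases hx2 : x = i₂
      · subst hx2
        obtain ⟨t₀, ht₀, huniq⟩ := colBars_cover (i := x) hv hB'v y hy1 hy2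
        refine ⟨t₀, ⟨Finset.mem_union.2 (Or.inr ht₀.1), ht₀.2⟩, ?_⟩
        rintro t' ⟨ht'm, ht'c⟩
        have hcol : t'.2.1 = x := (bar_col ht'c).symm
        rcases Finset.mem_union.1 ht'm with h | h
        · rcases Finset.mem_union.1 h with h | h
          · exact absurd (Or.inr hcol) (Finset.mem_filter.1 h).2
          · exact absurd ((colBars_col h).symm.trans hcol) hne
        · exact huniq t' ⟨h, ht'c⟩
      · obtain ⟨t₀, ht₀, huniq⟩ := hT.2 _ hc
        have ht₀F : t₀ ∈ F := Finset.mem_filter.2 ⟨ht₀.1, by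
          have : t₀.2.1 = x := (bar_col ht₀.2).symm
          rw [this]; tauto⟩
        refine ⟨t₀, ⟨Finset.mem_union.2 (Or.inl (Finset.mem_union.2 (Or.inl ht₀F))), ht₀.2⟩, ?_⟩
        rintro t' ⟨ht'm, ht'c⟩
        have hcol : t'.2.1 = x := (bar_col ht'c).symm
        rcases Finset.mem_union.1 ht'm with h | h
        · rcases Finset.mem_union.1 h with h | h
          · exact huniq t' ⟨(Finset.mem_filter.1 h).1, ht'c⟩
          · exact absurd ((colBars_col h).symm.trans hcol).symm hx1
        · exact absurd ((colBars_col h).symm.trans hcol).symm hx2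
  · -- vertCount
    intro i
    have e1 : vertCount ((F ∪ colBars v j₀ b i₁ A') ∪ colBars v j₀ b i₂ B') i
        = vertCount F i + vertCount (colBars v j₀ b i₁ A') i
          + vertCount (colBars v j₀ b i₂ B') i := by
      simp only [vertCount]
      rw [filter_card_union (hdisj2 A' B'), filter_card_union (hdisj1 A')]
    have e2 : vertCount T i
        = vertCount F i + vertCount (colBars v j₀ b i₁ A) i
          + vertCount (colBars v j₀ b i₂ B) i := by
      conv_lhs => rw [hTdec]
      simp only [vertCount]
      rw [filter_card_union (hdisj2 A B), filter_card_union (hdisj1 A)]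
    rw [e1, e2, vertCount_colBars, vertCount_colBars, vertCount_colBars, vertCount_colBars,
      hA'c, hB'c]
  · -- horizCount
    intro j
    have e1 : horizCount ((F ∪ colBars v j₀ b i₁ A') ∪ colBars v j₀ b i₂ B') j
        = horizCount F j + horizCount (colBars v j₀ b i₁ A') j
          + horizCount (colBars v j₀ b i₂ B') j := by
      simp only [horizCount]
      rw [filter_card_union (hdisj2 A' B'), filter_card_union (hdisj1 A')]
    have e2 : horizCount T j
        = horizCount F j + horizCount (colBars v j₀ b i₁ A) j
          + horizCount (colBars v j₀ b i₂ B) j := by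
      conv_lhs => rw [hTdec]
      simp only [horizCount]
      rw [filter_card_union (hdisj2 A B), filter_card_union (hdisj1 A)]
    rw [e1, e2, horizCount_colBars, horizCount_colBars, horizCount_colBars, horizCount_colBars]
    have := unit_swap (hcov j) (j₀ := j₀) (b := b)
    omega
  · -- i₁ top
    exact ⟨(true, i₁, j₀), Finset.mem_union.2 (Or.inl (Finset.mem_union.2 (Or.inr
      (mem_colBars_vert.2 ⟨rfl, hj₀A'⟩)))), rfl, mem_barCells_vert.2 ⟨rfl, le_refl _, by omega⟩⟩
  · -- i₂ not top
    rintro ⟨t, htm, htv, htc⟩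
    obtain ⟨bl, x, sa⟩ := t
    simp only at htv; subst htv
    obtain ⟨hx, h1, h2⟩ := mem_barCells_vert.1 htc
    simp only at hx; subst hx
    rcases Finset.mem_union.1 htm with h | h
    · rcases Finset.mem_union.1 h with h | h
      · exact (Finset.mem_filter.1 h).2 (Or.inr rfl)
      · exact hne ((mem_colBars_vert.1 h).1).symm
    · obtain ⟨-, hsa⟩ := mem_colBars_vert.1 h
      have := (hB'r sa hsa).1
      have heq : sa = j₀ := by omega
      exact hj₀B' (heq ▸ hsa)
  · -- other columns unchanged
    intro i hi1 hi2
    constructor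
    · rintro ⟨t, htm, htv, htc⟩
      have hcol : t.2.1 = i := (bar_col htc).symm
      rcases Finset.mem_union.1 htm with h | h
      · rcases Finset.mem_union.1 h with h | h
        · exact ⟨t, (Finset.mem_filter.1 h).1, htv, htc⟩
        · exact absurd ((colBars_col h).symm.trans hcol).symm hi1
      · exact absurd ((colBars_col h).symm.trans hcol).symm hi2
    · rintro ⟨t, htm, htv, htc⟩
      have hcol : t.2.1 = i := (bar_col htc).symm
      have htF : t ∈ F := Finset.mem_filter.2 ⟨htm, by rw [hcol]; tauto⟩
      exact ⟨t, Finset.mem_union.2 (Or.inl (Finset.mem_union.2 (Or.inl htF))), htv, htc⟩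

-- LAYER3
/-- Greedy-choice lemma.  Let `H` be a histogram in `R_{a×b}` admitting a tiling by
unit horizontal tiles and vertical bars of length `v` with projections `(m_i)`,
`(n_j)`.  Let `j₀` be the first (topmost) row of `H`, so that the columns of maximal
height are exactly those containing a cell of row `j₀`.  Let `S` be the greedy set:
a set of maximal-height columns of the right cardinality (number of maximal-height
columns minus `n j₀`) consisting of columns with the largest values of `m`.  Then
there is a valid tiling in which the set of maximal-height columns whose top cell is
covered by a vertical bar is exactly `S`. -/
theorem stmt_19 (a b v : ℕ) (ha : 1 ≤ a) (hb : 1 ≤ b) (hv : 1 ≤ v)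
    (H : Finset (ℕ × ℕ)) (hH : IsHistogram a b H)
    (m n : ℕ → ℕ)
    (hex : ∃ T : Finset BarP, IsTilingOf 1 v H T ∧
      (∀ i < a, vertCount T i = m i) ∧ (∀ j < b, horizCount T j = n j))
    (j₀ : ℕ) (hj₀ : ∃ i, (i, j₀) ∈ H) (hj₀min : ∀ i j : ℕ, (i, j) ∈ H → j₀ ≤ j)
    (S : Finset ℕ)
    (hSsub : S ⊆ (Finset.range a).filter (fun i => (i, j₀) ∈ H))
    (hScard : S.card + n j₀ = ((Finset.range a).filter (fun i => (i, j₀) ∈ H)).card)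
    (hSgreedy : ∀ i₁ ∈ S, ∀ i₂ ∈ (Finset.range a).filter (fun i => (i, j₀) ∈ H),
      i₂ ∉ S → m i₂ ≤ m i₁) :
    ∃ T : Finset BarP, IsTilingOf 1 v H T ∧
      (∀ i < a, vertCount T i = m i) ∧ (∀ j < b, horizCount T j = n j) ∧
      ∀ i ∈ (Finset.range a).filter (fun i => (i, j₀) ∈ H),
        (i ∈ S ↔ ∃ t ∈ T, t.1 = true ∧ (i, j₀) ∈ barCells 1 v t) := by
  obtain ⟨T₀, hT₀, hm₀, hn₀⟩ := hex
  obtain ⟨i₀, hi₀⟩ := hj₀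
  have hj₀b : j₀ < b := (cell_bounds hH hi₀).2
  have topcount : ∀ T : Finset BarP, IsTilingOf 1 v H T →
      (((Finset.range a).filter (fun i => (i, j₀) ∈ H)).filter
        (fun i => ∃ t ∈ T, t.1 = true ∧ (i, j₀) ∈ barCells 1 v t)).card
        + horizCount T j₀
        = ((Finset.range a).filter (fun i => (i, j₀) ∈ H)).card := by
    intro T hT
    rw [← Finset.card_filter_add_card_filter_not
      (s := (Finset.range a).filter (fun i => (i, j₀) ∈ H))
      (p := fun i => ∃ t ∈ T, t.1 = true ∧ (i, j₀) ∈ barCells 1 v t)]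
    congr 1
    rw [horizCount]
    symm
    apply Finset.card_bij (fun i _ => ((false, i, j₀) : BarP))
    · intro i hi
      obtain ⟨hiC, hnp⟩ := Finset.mem_filter.1 hi
      obtain ⟨-, hiH⟩ := Finset.mem_filter.1 hiC
      obtain ⟨t₀, ht₀, huniq⟩ := hT.2 _ hiH
      obtain ⟨bl, x, y⟩ := t₀
      cases bl
      · have heq := mem_barCells_horiz.1 ht₀.2
        simp only [Prod.mk.injEq] at heq
        obtain ⟨rfl, rfl⟩ := heq
        exact Finset.mem_filter.2 ⟨ht₀.1, rfl, rfl⟩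
      · exact absurd ⟨(true, x, y), ht₀.1, rfl, ht₀.2⟩ hnp
    · intro i1 h1 i2 h2 he
      simpa using congrArg (fun t : BarP => t.2.1) he
    · intro t ht
      obtain ⟨htT, hf, hj⟩ := Finset.mem_filter.1 ht
      obtain ⟨bl, x, y⟩ := t
      simp only at hf hj
      subst hf
      rw [show y = j₀ from hj] at htT
      have hxH : (x, j₀) ∈ H := hT.1 _ htT (mem_barCells_horiz.2 rfl)
      refine ⟨x, Finset.mem_filter.2 ⟨Finset.mem_filter.2
        ⟨Finset.mem_range.2 (cell_bounds hH hxH).1, hxH⟩, ?_⟩, by rw [show y = j₀ from hj]⟩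
      rintro ⟨t', ht'T, ht'v, ht'c⟩
      obtain ⟨t₀, -, huniq⟩ := hT.2 _ hxH
      have e1 := huniq _ ⟨htT, mem_barCells_horiz.2 rfl⟩
      have e2 := huniq _ ⟨ht'T, ht'c⟩
      rw [← e1] at e2
      rw [e2] at ht'v
      exact absurd ht'v (by simp)
  have hVcard : ∀ T : Finset BarP, IsTilingOf 1 v H T →
      (∀ j < b, horizCount T j = n j) →
      (((Finset.range a).filter (fun i => (i, j₀) ∈ H)).filter
        (fun i => ∃ t ∈ T, t.1 = true ∧ (i, j₀) ∈ barCells 1 v t)).card = S.card := by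
    intro T hT hn
    have h1 := topcount T hT
    rw [hn j₀ hj₀b] at h1
    omega
  have hmain : ∀ k (T : Finset BarP), IsTilingOf 1 v H T →
      (∀ i < a, vertCount T i = m i) → (∀ j < b, horizCount T j = n j) →
      (S \ ((Finset.range a).filter (fun i => (i, j₀) ∈ H)).filter
          (fun i => ∃ t ∈ T, t.1 = true ∧ (i, j₀) ∈ barCells 1 v t)).card ≤ k →
      ∃ T' : Finset BarP, IsTilingOf 1 v H T' ∧
        (∀ i < a, vertCount T' i = m i) ∧ (∀ j < b, horizCount T' j = n j) ∧
        ∀ i ∈ (Finset.range a).filter (fun i => (i, j₀) ∈ H),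
          (i ∈ S ↔ ∃ t ∈ T', t.1 = true ∧ (i, j₀) ∈ barCells 1 v t) := by
    intro k
    induction k with
    | zero =>
      intro T hT hm hn hk
      have hempty : S \ ((Finset.range a).filter (fun i => (i, j₀) ∈ H)).filter
          (fun i => ∃ t ∈ T, t.1 = true ∧ (i, j₀) ∈ barCells 1 v t) = ∅ :=
        Finset.card_eq_zero.1 (Nat.le_zero.1 hk)
      have hsub : S ⊆ ((Finset.range a).filter (fun i => (i, j₀) ∈ H)).filter
          (fun i => ∃ t ∈ T, t.1 = true ∧ (i, j₀) ∈ barCells 1 v t) :=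
        Finset.sdiff_eq_empty_iff_subset.1 hempty
      have heq : S = ((Finset.range a).filter (fun i => (i, j₀) ∈ H)).filter
          (fun i => ∃ t ∈ T, t.1 = true ∧ (i, j₀) ∈ barCells 1 v t) :=
        Finset.eq_of_subset_of_card_le hsub (le_of_eq (hVcard T hT hn))
      refine ⟨T, hT, hm, hn, ?_⟩
      intro i hiC
      constructor
      · intro hiS
        rw [heq] at hiS
        exact (Finset.mem_filter.1 hiS).2
      · intro hp
        rw [heq]
        exact Finset.mem_filter.2 ⟨hiC, hp⟩
    | succ k ih =>
      intro T hT hm hn hk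
      by_cases h0 : (S \ ((Finset.range a).filter (fun i => (i, j₀) ∈ H)).filter
          (fun i => ∃ t ∈ T, t.1 = true ∧ (i, j₀) ∈ barCells 1 v t)).card = 0
      · exact ih T hT hm hn (by omega)
      · obtain ⟨i₁, hi₁⟩ := Finset.card_pos.1 (Nat.pos_of_ne_zero h0)
        obtain ⟨hi₁S, hi₁V⟩ := Finset.mem_sdiff.1 hi₁
        have hVS : (((Finset.range a).filter (fun i => (i, j₀) ∈ H)).filter
            (fun i => ∃ t ∈ T, t.1 = true ∧ (i, j₀) ∈ barCells 1 v t) \ S).Nonempty := by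
          apply Finset.card_pos.1
          have e1 := Finset.card_sdiff_add_card_inter
            (((Finset.range a).filter (fun i => (i, j₀) ∈ H)).filter
              (fun i => ∃ t ∈ T, t.1 = true ∧ (i, j₀) ∈ barCells 1 v t)) S
          have e2 := Finset.card_sdiff_add_card_inter S
            (((Finset.range a).filter (fun i => (i, j₀) ∈ H)).filter
              (fun i => ∃ t ∈ T, t.1 = true ∧ (i, j₀) ∈ barCells 1 v t))
          have e3 : (S ∩ ((Finset.range a).filter (fun i => (i, j₀) ∈ H)).filter
              (fun i => ∃ t ∈ T, t.1 = true ∧ (i, j₀) ∈ barCells 1 v t)).card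
              = (((Finset.range a).filter (fun i => (i, j₀) ∈ H)).filter
                (fun i => ∃ t ∈ T, t.1 = true ∧ (i, j₀) ∈ barCells 1 v t) ∩ S).card := by
            rw [Finset.inter_comm]
          have e4 := hVcard T hT hn
          omega
        obtain ⟨i₂, hi₂⟩ := hVS
        obtain ⟨hi₂V, hi₂S⟩ := Finset.mem_sdiff.1 hi₂
        obtain ⟨hi₂C, h2top⟩ := Finset.mem_filter.1 hi₂V
        have hi₁C := hSsub hi₁S
        have h1H : (i₁, j₀) ∈ H := (Finset.mem_filter.1 hi₁C).2
        have h2H : (i₂, j₀) ∈ H := (Finset.mem_filter.1 hi₂C).2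
        have hne : i₁ ≠ i₂ := fun h => hi₂S (h ▸ hi₁S)
        have h1top : ¬ ∃ t ∈ T, t.1 = true ∧ (i₁, j₀) ∈ barCells 1 v t :=
          fun hp => hi₁V (Finset.mem_filter.2 ⟨hi₁C, hp⟩)
        have hvcard : vertCount T i₂ ≤ vertCount T i₁ := by
          rw [hm i₁ (Finset.mem_range.1 (Finset.mem_filter.1 hi₁C).1),
            hm i₂ (Finset.mem_range.1 (Finset.mem_filter.1 hi₂C).1)]
          exact hSgreedy i₁ hi₁S i₂ hi₂C hi₂S
        obtain ⟨T', hT', hvc, hhc, htop1, htop2, hother⟩ :=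
          exchange_step hH hv hj₀min hT hne h1H h2H h1top h2top hvcard
        have hsd : S \ ((Finset.range a).filter (fun i => (i, j₀) ∈ H)).filter
            (fun i => ∃ t ∈ T', t.1 = true ∧ (i, j₀) ∈ barCells 1 v t)
            = (S \ ((Finset.range a).filter (fun i => (i, j₀) ∈ H)).filter
              (fun i => ∃ t ∈ T, t.1 = true ∧ (i, j₀) ∈ barCells 1 v t)).erase i₁ := by
          ext i
          simp only [Finset.mem_erase, Finset.mem_sdiff, Finset.mem_filter]
          constructor
          · rintro ⟨hiS, hiV'⟩
            have hiC := hSsub hiS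
            have hii₁ : i ≠ i₁ := by
              rintro rfl
              exact hiV' ⟨Finset.mem_filter.1 hiC, htop1⟩
            have hii₂ : i ≠ i₂ := fun h => hi₂S (h ▸ hiS)
            refine ⟨hii₁, hiS, ?_⟩
            rintro ⟨-, hp⟩
            exact hiV' ⟨Finset.mem_filter.1 hiC, (hother i hii₁ hii₂).2 hp⟩
          · rintro ⟨hii₁, hiS, hiV⟩
            have hiC := hSsub hiS
            have hii₂ : i ≠ i₂ := fun h => hi₂S (h ▸ hiS)
            refine ⟨hiS, ?_⟩
            rintro ⟨-, hp⟩
            exact hiV ⟨Finset.mem_filter.1 hiC, (hother i hii₁ hii₂).1 hp⟩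
        refine ih T' hT' (fun i hia => (hvc i).trans (hm i hia))
          (fun j hjb => (hhc j).trans (hn j hjb)) ?_
        rw [hsd, Finset.card_erase_of_mem hi₁]
        omega
  exact hmain _ T₀ hT₀ hm₀ hn₀ le_rfl
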